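/- arXiv:2306.08109 — 2 statements merged into one kernel-verified Lean document; each statement's English description precedes it below -/
import Mathlib

section
/- Let f(x,u) = g(h(x,u)) where g : ℝ^{d̂} → ℝ is L₂-smooth with minimum value f⋆, and h is G₁-Lipschitz in its second argument, i.e., ‖h(x,u) − h(x,v)‖ ≤ G₁‖u−v‖. Then for any Q > 0 and any x, u, v: f(x,u) − f(x,v) ≤ Q⁻¹ L₂ (f(x,v) − f⋆) + (G₁²/2)(L₂ + Q)‖u − v‖². -/
open scoped RealInnerProductSpace

/-- Perturbation bound for f(x,u) = g(h(x,u)) when u changes. -/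
theorem stmt2 {E F G : Type*} [NormedAddCommGroup F] [InnerProductSpace ℝ F]
    [NormedAddCommGroup G] [InnerProductSpace ℝ G]
    (g : G → ℝ) (gr : G → G) (h : E → F → G) (L2 G1 fstar : ℝ)
    (hL2 : 0 < L2) (hG1 : 0 ≤ G1)
    (hsm : ∀ s1 s2 : G, g s2 ≤ g s1 + ⟪gr s1, s2 - s1⟫ + L2 / 2 * ‖s2 - s1‖ ^ 2)
    (hmin : IsGLB (Set.range g) fstar)
    (hlip : ∀ (x : E) (u v : F), ‖h x u - h x v‖ ≤ G1 * ‖u - v‖) :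
    ∀ (Q : ℝ), 0 < Q → ∀ (x : E) (u v : F),
      g (h x u) - g (h x v) ≤
        Q⁻¹ * L2 * (g (h x v) - fstar) + G1 ^ 2 / 2 * (L2 + Q) * ‖u - v‖ ^ 2 := by
  intro Q hQ x u v
  set s := h x v
  set t := h x u
  -- gradient norm bound: ‖gr s‖² ≤ 2 L2 (g s - fstar)
  have hgrad : ‖gr s‖ ^ 2 ≤ 2 * L2 * (g s - fstar) := by
    have hs2 := hsm s (s - (L2⁻¹) • gr s)
    have hstar : fstar ≤ g (s - (L2⁻¹) • gr s) := hmin.1 ⟨_, rfl⟩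
    have h1 : s - (L2⁻¹) • gr s - s = -((L2⁻¹) • gr s) := by abel
    rw [h1, inner_neg_right, real_inner_smul_right, real_inner_self_eq_norm_sq,
      norm_neg, norm_smul, Real.norm_eq_abs, abs_of_pos (inv_pos.2 hL2)] at hs2
    have e1 : L2⁻¹ * ‖gr s‖ ^ 2 - L2 / 2 * (L2⁻¹ * ‖gr s‖) ^ 2 = ‖gr s‖ ^ 2 / (2 * L2) := by
      field_simp; ring
    have h3 : ‖gr s‖ ^ 2 / (2 * L2) ≤ g s - fstar := by linarith
    rw [div_le_iff₀ (by linarith)] at h3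
    nlinarith [h3]
  -- smoothness at s, t
  have hsm' := hsm s t
  have hin : ⟪gr s, t - s⟫ ≤ ‖gr s‖ * ‖t - s‖ := real_inner_le_norm _ _
  have hyoung : ‖gr s‖ * ‖t - s‖ ≤ (2 * Q)⁻¹ * ‖gr s‖ ^ 2 + Q / 2 * ‖t - s‖ ^ 2 := by
    have h2 : (0:ℝ) < 2 * Q := by linarith
    have e2 : (2*Q)⁻¹ * ‖gr s‖ ^ 2 + Q / 2 * ‖t - s‖ ^ 2 - ‖gr s‖ * ‖t - s‖
        = (2*Q)⁻¹ * (‖gr s‖ - Q * ‖t - s‖) ^ 2 := by field_simp; ring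
    have := mul_nonneg (inv_pos.2 h2).le (sq_nonneg (‖gr s‖ - Q * ‖t - s‖))
    linarith
  have hts : ‖t - s‖ ^ 2 ≤ G1 ^ 2 * ‖u - v‖ ^ 2 := by
    have := hlip x u v
    nlinarith [norm_nonneg (t - s), norm_nonneg (u - v)]
  have hq : (2 * Q)⁻¹ * (2 * L2) = Q⁻¹ * L2 := by field_simp
  nlinarith [mul_le_mul_of_nonneg_left hgrad (inv_pos.2 (by linarith : (0:ℝ) < 2*Q)).le,
    mul_le_mul_of_nonneg_left hts (by linarith : (0:ℝ) ≤ (L2 + Q)/2)]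
end

section
/- Suppose f(x,u) = g(h(x,u)) where: f is μ-strongly convex in x; g is L₂-smooth with minimum f⋆ equal to the global minimum of f; h is G₁-Lipschitz in u; and min_x f(x,u) = f⋆ for each u in the considered region. Then ‖∇₂f(x,u)‖² ≤ (G₁² L₂ / μ) ‖∇₁f(x,u)‖² for all x, u in the region (gradient dominance of the first block over the second). -/
/-!
Strong convexity in `x` together with `inf_x f(x, u) = f⋆` gives the Polyak–Łojasiewicz bound
`2μ (f - f⋆) ≤ ‖∇₁f‖²`. On the other side, `L₂`-smoothness of `g` and `g ≥ f⋆` give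
`‖∇g‖² ≤ 2L₂ (g - f⋆)`, and by the chain rule `‖∇₂f‖ ≤ G₁ ‖∇g‖` since `u ↦ h(x, u)` is
`G₁`-Lipschitz. Chaining the three: `‖∇₂f‖² ≤ 2G₁²L₂ (f - f⋆) ≤ (G₁²L₂/μ) ‖∇₁f‖²`.
-/

open scoped RealInnerProductSpace

section Gradient

variable {E F : Type*} [NormedAddCommGroup E] [InnerProductSpace ℝ E]
  [NormedAddCommGroup F] [InnerProductSpace ℝ F]

/-- Completing the square: `d ↦ ⟪a, d⟫ + μ/2 ‖d‖²` is minimized at `d = -a/μ`. -/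
theorem neg_sq_norm_div_le_inner_add (a d : E) {μ : ℝ} (hμ : 0 < μ) :
    -(‖a‖ ^ 2 / (2 * μ)) ≤ ⟪a, d⟫ + μ / 2 * ‖d‖ ^ 2 := by
  have hsq : 0 ≤ ‖a + μ • d‖ ^ 2 := sq_nonneg _
  rw [norm_add_sq_real, real_inner_smul_right, norm_smul, Real.norm_of_nonneg hμ.le] at hsq
  rw [neg_le_iff_add_nonneg, ← mul_le_mul_iff_of_pos_left (by positivity : 0 < 2 * μ)]
  field_simp
  nlinarith

variable [CompleteSpace E] [CompleteSpace F]

theorem norm_gradient_eq_norm_fderiv (f : E → ℝ) (x : E) : ‖gradient f x‖ = ‖fderiv ℝ f x‖ :=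
  (InnerProductSpace.toDual ℝ E).symm.norm_map _

theorem sub_le_sq_norm_gradient_of_strongConvex {f : E → ℝ} {μ fstar : ℝ} (hμ : 0 < μ)
    (hsc : ∀ x y, f x + ⟪gradient f x, y - x⟫ + μ / 2 * ‖y - x‖ ^ 2 ≤ f y)
    (hinf : IsGLB (Set.range f) fstar) (x : E) :
    2 * μ * (f x - fstar) ≤ ‖gradient f x‖ ^ 2 := by
  have hlower : f x - ‖gradient f x‖ ^ 2 / (2 * μ) ∈ lowerBounds (Set.range f) := by
    rintro _ ⟨y, rfl⟩
    linarith [hsc x y, neg_sq_norm_div_le_inner_add (gradient f x) (y - x) hμ]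
  have hle := hinf.2 hlower
  rw [sub_le_comm, le_div_iff₀ (by positivity)] at hle
  linarith

/-- Bound `fstar` by the value of `g` after the gradient step `s - ∇g(s) / L`. -/
theorem sq_norm_gradient_le_of_smooth {g : E → ℝ} {L fstar : ℝ} (hL : 0 < L)
    (hsmooth : ∀ s t, g t ≤ g s + ⟪gradient g s, t - s⟫ + L / 2 * ‖t - s‖ ^ 2)
    (hlb : ∀ s, fstar ≤ g s) (s : E) :
    ‖gradient g s‖ ^ 2 ≤ 2 * L * (g s - fstar) := by
  set a := gradient g s
  have hstep := hsmooth s (s - L⁻¹ • a)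
  rw [sub_sub_cancel_left, inner_neg_right, real_inner_smul_right, real_inner_self_eq_norm_sq,
    norm_neg, norm_smul, Real.norm_of_nonneg (inv_nonneg.2 hL.le)] at hstep
  have hdecrease : g (s - L⁻¹ • a) ≤ g s - ‖a‖ ^ 2 / (2 * L) := by
    convert hstep using 1
    field_simp
    ring
  have hfin := (hlb _).trans hdecrease
  rw [le_sub_comm, div_le_iff₀ (by positivity)] at hfin
  linarith

theorem norm_gradient_comp_le_of_lipschitz {g : F → ℝ} {φ : E → F} {x : E} {C : ℝ}
    (hC : 0 ≤ C) (hg : DifferentiableAt ℝ g (φ x)) (hφ : DifferentiableAt ℝ φ x)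
    (hlip : ∀ y z, ‖φ y - φ z‖ ≤ C * ‖y - z‖) :
    ‖gradient (g ∘ φ) x‖ ≤ C * ‖gradient g (φ x)‖ := by
  have hφ_norm : ‖fderiv ℝ φ x‖ ≤ C :=
    norm_fderiv_le_of_lip' ℝ hC (Filter.Eventually.of_forall fun y => hlip y x)
  rw [norm_gradient_eq_norm_fderiv, norm_gradient_eq_norm_fderiv, fderiv_comp x hg hφ, mul_comm]
  calc ‖(fderiv ℝ g (φ x)).comp (fderiv ℝ φ x)‖
      ≤ ‖fderiv ℝ g (φ x)‖ * ‖fderiv ℝ φ x‖ := ContinuousLinearMap.opNorm_comp_le _ _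
    _ ≤ ‖fderiv ℝ g (φ x)‖ * C := by gcongr

end Gradient

/-- Gradient dominance of the first block over the second for f(x,u) = g(h(x,u)). -/
theorem stmt5 {E F G : Type*} [NormedAddCommGroup E] [InnerProductSpace ℝ E] [CompleteSpace E]
    [NormedAddCommGroup F] [InnerProductSpace ℝ F] [CompleteSpace F]
    [NormedAddCommGroup G] [InnerProductSpace ℝ G] [CompleteSpace G]
    (g : G → ℝ) (h : E → F → G) (μ L2 G1 fstar : ℝ)
    (hμ : 0 < μ) (hL2 : 0 < L2) (hG1 : 0 ≤ G1)
    (hgdiff : Differentiable ℝ g)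
    (hhdiff : ∀ x : E, Differentiable ℝ (h x))
    (hsc : ∀ (u : F) (x y : E),
      g (h x u) + ⟪gradient (fun x' => g (h x' u)) x, y - x⟫ + μ / 2 * ‖y - x‖ ^ 2
        ≤ g (h y u))
    (hgsm : ∀ s1 s2 : G, g s2 ≤ g s1 + ⟪gradient g s1, s2 - s1⟫ + L2 / 2 * ‖s2 - s1‖ ^ 2)
    (hglb : ∀ s : G, fstar ≤ g s)
    (hlip : ∀ (x : E) (u v : F), ‖h x u - h x v‖ ≤ G1 * ‖u - v‖)
    (hopt : ∀ u : F, IsGLB (Set.range fun x => g (h x u)) fstar) :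
    ∀ (x : E) (u : F),
      ‖gradient (fun u' => g (h x u')) u‖ ^ 2 ≤
        G1 ^ 2 * L2 / μ * ‖gradient (fun x' => g (h x' u)) x‖ ^ 2 := by
  intro x u
  have hPL := sub_le_sq_norm_gradient_of_strongConvex hμ (hsc u) (hopt u) x
  have hsmooth := sq_norm_gradient_le_of_smooth hL2 hgsm hglb (h x u)
  have hchain : ‖gradient (fun u' => g (h x u')) u‖ ≤ G1 * ‖gradient g (h x u)‖ :=
    norm_gradient_comp_le_of_lipschitz hG1 (hgdiff _) (hhdiff x u) (hlip x)
  have hchain_sq := pow_le_pow_left₀ (norm_nonneg _) hchain 2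
  rw [mul_pow] at hchain_sq
  rw [div_mul_eq_mul_div, le_div_iff₀ hμ]
  calc ‖gradient (fun u' => g (h x u')) u‖ ^ 2 * μ
      ≤ G1 ^ 2 * (2 * L2 * (g (h x u) - fstar)) * μ := by gcongr; exact hchain_sq.trans (by gcongr)
    _ = G1 ^ 2 * L2 * (2 * μ * (g (h x u) - fstar)) := by ring
    _ ≤ G1 ^ 2 * L2 * ‖gradient (fun x' => g (h x' u)) x‖ ^ 2 := by gcongr
end
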